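/- arXiv:1210.2121 — 11 statements merged into one kernel-verified Lean document; each statement's English description precedes it below -/
import Mathlib

section
/- If X is a [μ,λ]-compact topological space, D is a μ-complete ultrafilter over a set I, and 2^|I| ≤ λ, then X is D-compact. -/
open Cardinal

/-- `X` is `[μ,λ]`-compact: every open cover by at most `lam` sets
has a subcover by fewer than `μ` sets. -/
def CptIn (μ lam : Cardinal) (X : Type) [TopologicalSpace X] : Prop :=
  ∀ 𝒰 : Set (Set X), (∀ U ∈ 𝒰, IsOpen U) → #𝒰 ≤ lam → ⋃₀ 𝒰 = Set.univ →
    ∃ 𝒱 ⊆ 𝒰, #𝒱 < μ ∧ ⋃₀ 𝒱 = Set.univ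

/-- `p` is a `D`-limit point of the sequence `x`. -/
def IsDLimit {I X : Type} [TopologicalSpace X] (D : Ultrafilter I) (x : I → X) (p : X) : Prop :=
  ∀ U : Set X, IsOpen U → p ∈ U → {i | x i ∈ U} ∈ D

/-- `X` is `D`-compact. -/
def DCompact {I : Type} (D : Ultrafilter I) (X : Type) [TopologicalSpace X] : Prop :=
  ∀ x : I → X, ∃ p : X, IsDLimit D x p

/-- `D` is `μ`-complete. -/
def MuComplete {I : Type} (μ : Cardinal) (D : Ultrafilter I) : Prop :=
  ∀ S : Set (Set I), #S < μ → (∀ A ∈ S, A ∈ D) → ⋂₀ S ∈ D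

/-- `D` is `(μ,lam)`-regular: there is a family of `lam`-many members of `D`
every intersection of `μ`-many of which is empty. -/
def RegUF {I : Type} (μ lam : Cardinal) (D : Ultrafilter I) : Prop :=
  ∃ (A : Type) (Z : A → Set I), #A = lam ∧ (∀ a, Z a ∈ D) ∧
    ∀ S : Set A, #S = μ → ⋂ a ∈ S, Z a = ∅

/-- The ordinal space of a cardinal, with the order topology. -/
noncomputable def ordSpace (c : Cardinal) : Type := c.ord.ToType

noncomputable instance (c : Cardinal) : LinearOrder (ordSpace c) :=
  inferInstanceAs (LinearOrder c.ord.ToType)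
noncomputable instance (c : Cardinal) : TopologicalSpace (ordSpace c) := Preorder.topology _
instance (c : Cardinal) : OrderTopology (ordSpace c) := ⟨rfl⟩

/-!
If a sequence `x : I → X` had no `D`-limit point, every point would have an open neighbourhood
`U` with `x ⁻¹' U ∉ D`. Enlarging `U` to the largest open set whose preimage lies in
`A = x ⁻¹' U`, namely `(closure (x '' Aᶜ))ᶜ`, leaves at most `2 ^ #I` open sets covering `X`,
so fewer than `μ` of them do. Their preimages are
not in `D`, hence by `μ`-completeness neither is their union; but that union is all of `I`.
-/

theorem MuComplete.sUnion_notMem {I : Type} {μ : Cardinal} {D : Ultrafilter I}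
    (hD : MuComplete μ D) {𝒮 : Set (Set I)} (h𝒮 : #𝒮 < μ) (hnot : ∀ A ∈ 𝒮, A ∉ D) :
    ⋃₀ 𝒮 ∉ D := by
  rw [← Ultrafilter.compl_mem_iff_notMem, Set.compl_sUnion]
  refine hD _ (mk_image_le.trans_lt h𝒮) ?_
  rintro _ ⟨A, hA, rfl⟩
  exact Ultrafilter.compl_mem_iff_notMem.2 (hnot A hA)

section

variable {I X : Type} [TopologicalSpace X]

theorem preimage_compl_closure_image_compl_subset (x : I → X) (A : Set I) :
    x ⁻¹' (closure (x '' Aᶜ))ᶜ ⊆ A := fun i hi => by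
  by_contra hiA
  exact hi (subset_closure ⟨i, hiA, rfl⟩)

theorem sUnion_compl_closure_image_compl_eq_univ {D : Ultrafilter I} {x : I → X}
    (hx : ∀ p, ¬IsDLimit D x p) :
    ⋃₀ ((fun A => (closure (x '' Aᶜ))ᶜ) '' {A : Set I | A ∉ D}) = Set.univ := by
  refine Set.eq_univ_of_forall fun p => ?_
  obtain ⟨U, hUo, hpU, hUD⟩ : ∃ U, IsOpen U ∧ p ∈ U ∧ {i | x i ∈ U} ∉ D := by
    simpa [IsDLimit] using hx p
  refine ⟨_, ⟨x ⁻¹' U, hUD, rfl⟩, fun hp => ?_⟩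
  obtain ⟨_, hq, i, hi, rfl⟩ := mem_closure_iff.1 hp U hUo hpU
  exact hi hq

end

theorem stmt0_general {I X : Type} [TopologicalSpace X] (μ lam : Cardinal) (D : Ultrafilter I)
    (hD : MuComplete μ D) (hI : 2 ^ #I ≤ lam) (hX : CptIn μ lam X) :
    DCompact D X := by
  intro x
  by_contra! hx
  obtain ⟨𝒱, h𝒱𝒰, h𝒱card, h𝒱cov⟩ :=
    hX _ (by rintro _ ⟨A, -, rfl⟩; exact isClosed_closure.isOpen_compl)
      (mk_image_le.trans <| (mk_set_le _).trans <| mk_set.trans_le hI)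
      (sUnion_compl_closure_image_compl_eq_univ hx)
  have hnot : ⋃₀ (Set.preimage x '' 𝒱) ∉ D := by
    refine hD.sUnion_notMem (mk_image_le.trans_lt h𝒱card) ?_
    rintro _ ⟨V, hV, rfl⟩
    obtain ⟨A, hA, rfl⟩ := h𝒱𝒰 hV
    exact fun h => hA (D.mem_of_superset h (preimage_compl_closure_image_compl_subset x A))
  rw [Set.sUnion_image, ← Set.preimage_iUnion₂, ← Set.sUnion_eq_biUnion, h𝒱cov] at hnot
  exact hnot Filter.univ_mem

theorem stmt0 {I X : Type} [TopologicalSpace X] (μ lam : Cardinal) (D : Ultrafilter I)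
    (hμ : ℵ₀ ≤ μ) (hml : μ ≤ lam)
    (hD : MuComplete μ D) (hI : 2 ^ #I ≤ lam) (hX : CptIn μ lam X) :
    DCompact D X :=
  stmt0_general μ lam D hD hI hX
end

section
/- If D is a nonprincipal ultrafilter and κ is the least infinite cardinal such that D is (κ,κ)-regular, then κ is a regular cardinal and D is κ-complete. -/
open Cardinal

/-!
If `D` is not `κ`-complete, let `μ < κ` be the least size of a family of members of `D` whose
intersection is not in `D`. Then `D` is `μ`-complete, `μ` is infinite, and removing the
intersection from each member of such a family, enumerated by `μ`, gives `μ` members of `D` with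
empty intersection. Intersecting initial segments of this enumeration yields a decreasing
sequence in `D` (by `μ`-completeness), and any `μ` of its terms are cofinal in it, hence have empty
intersection: `D` is `(μ,μ)`-regular, against the minimality of `κ`.

Once `D` is `κ`-complete, the same initial-segment trick applied to a `(κ,κ)`-regular family and
restricted to a cofinal sequence of length `cf κ` shows that `D` is `(cf κ, cf κ)`-regular, so
minimality forces `cf κ = κ`.
-/

open Set

lemma aleph0_le_cof_ord {κ : Cardinal} (hκ : ℵ₀ ≤ κ) : ℵ₀ ≤ κ.ord.cof :=
  Ordinal.aleph0_le_cof_iff.2 (Ordinal.one_lt_cof_iff.2 (isSuccLimit_ord hκ))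

lemma mk_Iic_lt {c : Cardinal} (hc : ℵ₀ ≤ c) (i : c.ord.ToType) : #(Iic i) < c := by
  rw [← Iio_insert]
  exact mk_insert_le.trans_lt
    (add_lt_of_lt hc (by simpa using mk_Iio_lt i) (one_lt_aleph0.trans_le hc))

lemma exists_le_mem_of_mk_eq {c : Cardinal} {S : Set c.ord.ToType} (hS : #S = c)
    (i : c.ord.ToType) : ∃ j ∈ S, i ≤ j := by
  by_contra! h
  have hi : #(Iio i) < c := by simpa using mk_Iio_lt i
  exact ((mk_le_mk_of_subset (h : S ⊆ Iio i)).trans_lt hi).ne hS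

section Ultrafilter

variable {I : Type} {D : Ultrafilter I}

lemma MuComplete.mono {μ κ : Cardinal} (h : MuComplete κ D) (hμκ : μ ≤ κ) : MuComplete μ D :=
  fun S hS => h S (hS.trans_le hμκ)

lemma MuComplete.biInter_mem {μ : Cardinal} {α : Type} (h : MuComplete μ D) {s : Set α}
    (hs : #s < μ) {Z : α → Set I} (hZ : ∀ a ∈ s, Z a ∈ D) : ⋂ a ∈ s, Z a ∈ D := by
  rw [← sInter_image]
  exact h _ (mk_image_le.trans_lt hs) (by rintro _ ⟨a, ha, rfl⟩; exact hZ a ha)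

lemma regUF_of_iInter_eq_empty {μ : Cardinal} (hμ : ℵ₀ ≤ μ) (hD : MuComplete μ D)
    (Z : μ.ord.ToType → Set I) (hZD : ∀ i, Z i ∈ D) (hZ : ⋂ i, Z i = ∅) : RegUF μ μ D := by
  refine ⟨μ.ord.ToType, fun i => ⋂ j ∈ Iic i, Z j, by simp,
    fun i => hD.biInter_mem (mk_Iic_lt hμ i) fun j _ => hZD j, fun S hS => ?_⟩
  refine eq_empty_of_subset_empty fun x hx => hZ ▸ mem_iInter.2 fun j => ?_
  obtain ⟨i, hiS, hji⟩ := exists_le_mem_of_mk_eq hS j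
  exact mem_iInter₂.1 (mem_iInter₂.1 hx i hiS) j hji

lemma aleph0_le_mk_of_sInter_notMem {S : Set (Set I)} (hSD : ∀ A ∈ S, A ∈ D)
    (hS : ⋂₀ S ∉ D) : ℵ₀ ≤ #S := by
  by_contra! hfin
  exact hS ((Filter.sInter_mem (lt_aleph0_iff_set_finite.1 hfin)).2 hSD)

lemma regUF_of_sInter_notMem {S : Set (Set I)} (hS : ℵ₀ ≤ #S) (hD : MuComplete #S D)
    (hSD : ∀ A ∈ S, A ∈ D) (hSI : ⋂₀ S ∉ D) : RegUF #S #S D := by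
  obtain ⟨f⟩ : Nonempty ((#S).ord.ToType ≃ S) := Cardinal.eq.1 (by simp)
  have : Nonempty (#S).ord.ToType := by
    rw [← mk_ne_zero_iff, mk_ord_toType]
    exact (aleph0_pos.trans_le hS).ne'
  refine regUF_of_iInter_eq_empty hS hD (fun i => f i ∩ (⋂₀ S)ᶜ)
    (fun i => Filter.inter_mem (hSD _ (f i).2) (Ultrafilter.compl_mem_iff_notMem.2 hSI)) ?_
  rw [← iInter_inter, f.surjective.iInter_comp (fun A : S => (A : Set I)), ← sInter_eq_iInter,
    inter_compl_self]

lemma exists_muComplete_of_not_muComplete {κ : Cardinal} (h : ¬MuComplete κ D) :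
    ∃ S : Set (Set I), #S < κ ∧ (∀ A ∈ S, A ∈ D) ∧ ⋂₀ S ∉ D ∧ MuComplete #S D := by
  simp only [MuComplete, not_forall] at h
  obtain ⟨S₀, hS₀κ, hS₀D, hS₀⟩ := h
  obtain ⟨_, ⟨S, rfl, hSD, hS⟩, hmin⟩ := Cardinal.lt_wf.has_min
    {c | ∃ S : Set (Set I), #S = c ∧ (∀ A ∈ S, A ∈ D) ∧ ⋂₀ S ∉ D} ⟨_, S₀, rfl, hS₀D, hS₀⟩
  refine ⟨S, (not_lt.1 (hmin _ ⟨S₀, rfl, hS₀D, hS₀⟩)).trans_lt hS₀κ, hSD, hS, ?_⟩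
  intro T hT hTD
  by_contra hTI
  exact hmin _ ⟨T, rfl, hTD, hTI⟩ hT

lemma muComplete_of_forall_not_regUF {κ : Cardinal}
    (h : ∀ μ : Cardinal, ℵ₀ ≤ μ → μ < κ → ¬RegUF μ μ D) : MuComplete κ D := by
  by_contra hκ
  obtain ⟨S, hSκ, hSD, hSI, hS⟩ := exists_muComplete_of_not_muComplete hκ
  have hinf := aleph0_le_mk_of_sInter_notMem hSD hSI
  exact h _ hinf hSκ (regUF_of_sInter_notMem hinf hS hSD hSI)

lemma regUF_cof_of_muComplete {κ : Cardinal} (hκ : ℵ₀ ≤ κ) (hD : MuComplete κ D)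
    (hreg : RegUF κ κ D) : RegUF κ.ord.cof κ.ord.cof D := by
  obtain ⟨A, Z, hA, hZD, hZ⟩ := hreg
  have hZempty : ⋂ a, Z a = ∅ := by simpa using hZ univ (by rw [mk_univ, hA])
  obtain ⟨q⟩ : Nonempty (κ.ord.ToType ≃ A) := Cardinal.eq.1 (by simp [hA])
  obtain ⟨s, hs, hscard⟩ := Order.exists_cof_eq κ.ord.ToType
  rw [Ordinal.cof_toType] at hscard
  obtain ⟨e⟩ : Nonempty (κ.ord.cof.ord.ToType ≃ s) := Cardinal.eq.1 (by simp [hscard])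
  let V : κ.ord.ToType → Set I := fun i => ⋂ j ∈ Iic i, Z (q j)
  refine regUF_of_iInter_eq_empty (aleph0_le_cof_ord hκ) (hD.mono (Ordinal.cof_ord_le κ))
    (fun ξ => V (e ξ))
    (fun ξ => hD.biInter_mem (mk_Iic_lt hκ _) fun j _ => hZD _) ?_
  refine eq_empty_of_subset_empty fun x hx => hZempty ▸ mem_iInter.2 fun a => ?_
  obtain ⟨b, hb, hab⟩ := hs (q.symm a)
  have hxV := mem_iInter.1 hx (e.symm ⟨b, hb⟩)
  simp only [Equiv.apply_symm_apply, V, mem_iInter] at hxV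
  simpa using hxV (q.symm a) hab

end Ultrafilter

theorem stmt3_general {I : Type} (D : Ultrafilter I) (κ : Cardinal)
    (hκ : ℵ₀ ≤ κ) (hreg : RegUF κ κ D)
    (hleast : ∀ κ' : Cardinal, ℵ₀ ≤ κ' → κ' < κ → ¬RegUF κ' κ' D) :
    κ.IsRegular ∧ MuComplete κ D := by
  have hcomp : MuComplete κ D := muComplete_of_forall_not_regUF hleast
  refine ⟨⟨hκ, not_lt.1 fun hcof => ?_⟩, hcomp⟩
  exact hleast _ (aleph0_le_cof_ord hκ) hcof (regUF_cof_of_muComplete hκ hcomp hreg)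

theorem stmt3 {I : Type} (D : Ultrafilter I) (κ : Cardinal)
    (hnp : ¬∃ i : I, D = (pure i : Ultrafilter I))
    (hκ : ℵ₀ ≤ κ) (hreg : RegUF κ κ D)
    (hleast : ∀ κ' : Cardinal, ℵ₀ ≤ κ' → κ' < κ → ¬RegUF κ' κ' D) :
    κ.IsRegular ∧ MuComplete κ D :=
  stmt3_general D κ hκ hreg hleast
end

section
/- If D is a μ-complete ultrafilter over a set I, then every box_{<μ} product of D-compact topological spaces is D-compact. -/
open Cardinal

/-- The `box_{<μ}` product topology. -/
def boxTop {J : Type} (μ : Cardinal) (X : J → Type) [∀ j, TopologicalSpace (X j)] :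
    TopologicalSpace (∀ j, X j) :=
  TopologicalSpace.generateFrom
    { S | ∃ O : ∀ j, Set (X j), (∀ j, IsOpen (O j)) ∧ #{j | O j ≠ Set.univ} < μ ∧
        S = {f | ∀ j, f j ∈ O j} }

theorem stmt4 {I J : Type} (μ : Cardinal) (D : Ultrafilter I) (X : J → Type)
    [∀ j, TopologicalSpace (X j)] (hμ : ℵ₀ ≤ μ)
    (hD : MuComplete μ D) (h : ∀ j, DCompact D (X j)) :
    @DCompact I D (∀ j, X j) (boxTop μ X) := by
  classical
  intro x
  choose p hp using fun j => h j (fun i => x i j)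
  refine ⟨p, ?_⟩
  intro U hU
  have hU' : TopologicalSpace.GenerateOpen
      { S | ∃ O : ∀ j, Set (X j), (∀ j, IsOpen (O j)) ∧ #{j | O j ≠ Set.univ} < μ ∧
        S = {f | ∀ j, f j ∈ O j} } U := hU
  clear hU
  induction hU' with
  | basic S hS =>
    intro hpU
    obtain ⟨O, hOopen, hcard, rfl⟩ := hS
    set T : Set (Set I) := (fun j => {i | x i j ∈ O j}) '' {j | O j ≠ Set.univ} with hTdef
    have hT : ⋂₀ T ∈ D := by
      apply hD
      · exact lt_of_le_of_lt Cardinal.mk_image_le hcard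
      · rintro A ⟨j, hj, rfl⟩
        exact hp j (O j) (hOopen j) (hpU j)
    refine D.toFilter.mem_of_superset hT ?_
    intro i hi j
    by_cases hj : O j = Set.univ
    · simp [hj]
    · exact hi _ ⟨j, hj, rfl⟩
  | univ => intro _; exact Filter.univ_mem
  | inter U V hU hV ihU ihV =>
    intro hpUV
    exact Filter.inter_mem (ihU hpUV.1) (ihV hpUV.2)
  | sUnion S hS ih =>
    intro hpU
    obtain ⟨t, ht, hpt⟩ := hpU
    exact Filter.mem_of_superset (ih t ht hpt) (fun i hi => ⟨t, ht, hi⟩)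
end

section
/- If λ is a singular cardinal with μ ≤ cf(λ), and X is a topological space that is [μ,ν]-compact for every cardinal ν < λ and [cf(λ),cf(λ)]-compact, then X is [μ,λ]-compact. -/
/-!
Index a cover of size `λ` by the ordinal `λ` and replace it by the increasing family of its
initial unions along a cofinal subset of size `cf λ`. By `[cf λ, cf λ]`-compactness fewer than
`cf λ` of these already cover, so they are bounded by some `β < λ`: the members of the original
cover indexed below `β` form a subcover of size `|β| < λ`, which has a subcover of size `< μ`.
-/

open Cardinal

open Set

theorem Order.exists_lt_of_mk_lt_cof {α : Type*} [LinearOrder α] {T : Set α}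
    (hT : #T < Order.cof α) : ∃ b, ∀ t ∈ T, t < b := by
  have hT : ¬ IsCofinal T := fun h => (Order.cof_le h).not_gt hT
  simpa [IsCofinal] using hT

section

variable {X α : Type} [TopologicalSpace X]

theorem CptIn.exists_lowerClosure_cover [Preorder α]
    (h : CptIn (Order.cof α) (Order.cof α) X) {f : α → Set X} (hf : ∀ a, IsOpen (f a))
    (hcov : ⋃ a, f a = Set.univ) :
    ∃ T : Set α, #T < Order.cof α ∧ ⋃ a ∈ lowerClosure T, f a = Set.univ := by
  obtain ⟨S, hS, hScard⟩ := Order.exists_cof_eq α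
  set V : α → Set X := fun s => ⋃ a ∈ Iic s, f a
  have hVcov : ⋃₀ (V '' S) = Set.univ := by
    refine eq_univ_of_forall fun x => ?_
    obtain ⟨a, hxa⟩ := mem_iUnion.1 (hcov ▸ Set.mem_univ x)
    obtain ⟨s, hsS, has⟩ := hS a
    exact ⟨V s, mem_image_of_mem V hsS, mem_biUnion (show a ∈ Iic s from has) hxa⟩
  obtain ⟨𝒱, h𝒱V, h𝒱card, h𝒱cov⟩ := h (V '' S)
    (by rintro _ ⟨s, -, rfl⟩; exact isOpen_biUnion fun a _ => hf a)
    (mk_image_le.trans hScard.le) hVcov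
  obtain ⟨T, -, hTinj, rfl⟩ := SurjOn.exists_subset_injOn_image_eq h𝒱V
  refine ⟨T, mk_image_eq_of_injOn V T hTinj ▸ h𝒱card, eq_univ_of_forall fun x => ?_⟩
  obtain ⟨_, ⟨t, htT, rfl⟩, hxt⟩ := h𝒱cov ▸ Set.mem_univ x
  obtain ⟨a, hat, hxa⟩ := mem_iUnion₂.1 hxt
  exact mem_biUnion (show a ∈ lowerClosure T from ⟨t, htT, hat⟩) hxa

theorem CptIn.exists_Iio_cover [LinearOrder α]
    (h : CptIn (Order.cof α) (Order.cof α) X) {f : α → Set X} (hf : ∀ a, IsOpen (f a))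
    (hcov : ⋃ a, f a = Set.univ) :
    ∃ b, ⋃ a ∈ Iio b, f a = Set.univ := by
  obtain ⟨T, hTcard, hTcov⟩ := h.exists_lowerClosure_cover hf hcov
  obtain ⟨b, hb⟩ := Order.exists_lt_of_mk_lt_cof hTcard
  refine ⟨b, eq_univ_of_forall fun x => ?_⟩
  obtain ⟨a, ⟨t, htT, hat⟩, hxa⟩ := mem_iUnion₂.1 (hTcov ▸ Set.mem_univ x)
  exact mem_biUnion (show a < b from hat.trans_lt (hb t htT)) hxa

end

theorem stmt7_general {X : Type} [TopologicalSpace X] (μ lam : Cardinal)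
    (h1 : ∀ ν : Cardinal, ν < lam → CptIn μ ν X)
    (h2 : CptIn (lam.ord.cof) (lam.ord.cof) X) :
    CptIn μ lam X := by
  intro 𝒰 hopen hcard hcov
  rcases hcard.lt_or_eq with hlt | heq
  · exact h1 _ hlt 𝒰 hopen le_rfl hcov
  obtain ⟨e⟩ : Nonempty (lam.ord.ToType ≃ 𝒰) := by
    rw [← Cardinal.eq, mk_toType, card_ord, heq]
  set f : lam.ord.ToType → Set X := fun β => e β
  have hfcov : ⋃ β, f β = Set.univ := by
    rw [← hcov, sUnion_eq_iUnion]
    exact e.iSup_comp (g := fun U : 𝒰 => (U : Set X))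
  rw [← Ordinal.cof_toType] at h2
  obtain ⟨b, hbcov⟩ := h2.exists_Iio_cover (fun β => hopen _ (e β).2) hfcov
  have hsub : f '' Iio b ⊆ 𝒰 := by rintro _ ⟨β, -, rfl⟩; exact (e β).2
  obtain ⟨𝒱, h𝒱sub, h𝒱card, h𝒱cov⟩ :=
    h1 _ (mk_image_le.trans_lt ((mk_Iio_lt b (by simp)).trans_eq (by simp))) (f '' Iio b)
      (fun U hU => hopen U (hsub hU)) le_rfl (by rwa [sUnion_image])
  exact ⟨𝒱, h𝒱sub.trans hsub, h𝒱card, h𝒱cov⟩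

theorem stmt7 {X : Type} [TopologicalSpace X] (μ lam : Cardinal)
    (hμ : ℵ₀ ≤ μ) (hsing : lam.ord.cof < lam) (hcf : μ ≤ lam.ord.cof)
    (h1 : ∀ ν : Cardinal, ν < lam → CptIn μ ν X)
    (h2 : CptIn (lam.ord.cof) (lam.ord.cof) X) :
    CptIn μ lam X :=
  stmt7_general μ lam h1 h2
end

section
/- A topological space is [ω,λ]-compact if and only if it is both [μ,λ]-compact and [ω,μ']-compact for every cardinal μ' < μ. -/
open Cardinal

namespace CptIn

variable {X : Type} [TopologicalSpace X]

theorem mono_left {μ μ' lam : Cardinal} (hμ : μ ≤ μ') (h : CptIn μ lam X) :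
    CptIn μ' lam X := by
  intro 𝒰 hopen hcard hcover
  obtain ⟨𝒱, hsub, hlt, hcover'⟩ := h 𝒰 hopen hcard hcover
  exact ⟨𝒱, hsub, hlt.trans_le hμ, hcover'⟩

theorem mono_right {μ lam lam' : Cardinal} (hlam : lam' ≤ lam) (h : CptIn μ lam X) :
    CptIn μ lam' X :=
  fun 𝒰 hopen hcard hcover => h 𝒰 hopen (hcard.trans hlam) hcover

/-- A subcover of size `κ < μ` can be refined further by `[ν, κ]`-compactness. -/
theorem trans {ν μ lam : Cardinal} (h : CptIn μ lam X)
    (hsmall : ∀ κ : Cardinal, ν ≤ κ → κ < μ → CptIn ν κ X) : CptIn ν lam X := by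
  intro 𝒰 hopen hcard hcover
  obtain ⟨𝒱, h𝒱𝒰, h𝒱μ, h𝒱cover⟩ := h 𝒰 hopen hcard hcover
  by_cases h𝒱ν : #𝒱 < ν
  · exact ⟨𝒱, h𝒱𝒰, h𝒱ν, h𝒱cover⟩
  obtain ⟨𝒲, h𝒲𝒱, h𝒲ν, h𝒲cover⟩ :=
    hsmall #𝒱 (not_lt.mp h𝒱ν) h𝒱μ 𝒱 (fun U hU => hopen U (h𝒱𝒰 hU)) le_rfl h𝒱cover
  exact ⟨𝒲, h𝒲𝒱.trans h𝒱𝒰, h𝒲ν, h𝒲cover⟩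

end CptIn

theorem stmt8 {X : Type} [TopologicalSpace X] (μ lam : Cardinal)
    (hμ : ℵ₀ ≤ μ) (hml : μ ≤ lam) :
    CptIn ℵ₀ lam X ↔
      CptIn μ lam X ∧ ∀ μ' : Cardinal, ℵ₀ ≤ μ' → μ' < μ → CptIn ℵ₀ μ' X :=
  ⟨fun h => ⟨h.mono_left hμ, fun _ _ hlt => h.mono_right (hlt.le.trans hml)⟩,
    fun ⟨h, hsmall⟩ => h.trans hsmall⟩
end

section
/- Suppose ω ≤ cf(λ) < μ ≤ λ. Let X be the topological disjoint union of the ordinal spaces cf(λ) and λ⁺ (each with the order topology). Then X is [μ,λ]-compact. -/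
open Cardinal

/-!
The sum is handled summand by summand. The space `cf λ` has fewer than `μ` points, so one set
per point suffices. In `λ⁺`, an open set whose complement is cofinal misses the club formed by
that complement; since fewer than `cof λ⁺ = λ⁺` clubs intersect in a club, some member of a cover
by `λ` open sets contains a tail `(b, λ⁺)`, and the compact interval `[0, b]` needs only
finitely many further members.
-/

open Set Order

section CptIn

variable {μ lam : Cardinal} {X Y Z : Type} [TopologicalSpace X] [TopologicalSpace Y]
  [TopologicalSpace Z]

theorem CptIn.mono {ν : Cardinal} (h : CptIn μ lam X) (hμν : μ ≤ ν) : CptIn ν lam X :=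
  fun 𝒰 hopen hcard hcover ↦
    let ⟨𝒱, h𝒱, hcard𝒱, hcover𝒱⟩ := h 𝒰 hopen hcard hcover
    ⟨𝒱, h𝒱, hcard𝒱.trans_le hμν, hcover𝒱⟩

theorem cptIn_of_mk_lt (hX : #X < μ) : CptIn μ lam X := by
  intro 𝒰 _ _ hcover
  have hmem (x : X) : ∃ U ∈ 𝒰, x ∈ U := by
    simpa only [← mem_sUnion, hcover] using mem_univ x
  choose U hU𝒰 hxU using hmem
  refine ⟨range U, range_subset_iff.2 hU𝒰, mk_range_le.trans_lt hX, ?_⟩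
  exact eq_univ_of_forall fun x ↦ ⟨U x, mem_range_self x, hxU x⟩

theorem CptIn.exists_subcover_range (h : CptIn μ lam X) {f : X → Z} (hf : Continuous f)
    {𝒰 : Set (Set Z)} (hopen : ∀ U ∈ 𝒰, IsOpen U) (hcard : #𝒰 ≤ lam)
    (hcover : ⋃₀ 𝒰 = Set.univ) : ∃ 𝒱 ⊆ 𝒰, #𝒱 < μ ∧ range f ⊆ ⋃₀ 𝒱 := by
  obtain ⟨𝒲, h𝒲, hcard𝒲, hcover𝒲⟩ := h (preimage f '' 𝒰)
    (forall_mem_image.2 fun U hU ↦ (hopen U hU).preimage hf) (mk_image_le.trans hcard)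
    (by rw [sUnion_image, ← preimage_iUnion₂, ← sUnion_eq_biUnion, hcover, preimage_univ])
  obtain ⟨𝒱, h𝒱𝒰, hbij⟩ := (surjOn_iff_exists_bijOn_subset).1 h𝒲
  refine ⟨𝒱, h𝒱𝒰, ?_, ?_⟩
  · rwa [← mk_image_eq_of_injOn _ _ hbij.injOn, hbij.image_eq]
  · rintro _ ⟨x, rfl⟩
    obtain ⟨W, hW, hxW⟩ := hcover𝒲.symm ▸ mem_univ x
    obtain ⟨V, hV, rfl⟩ := hbij.surjOn hW
    exact ⟨V, hV, hxW⟩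

theorem CptIn.sum (hμ : ℵ₀ ≤ μ) (hX : CptIn μ lam X) (hY : CptIn μ lam Y) :
    CptIn μ lam (X ⊕ Y) := by
  intro 𝒰 hopen hcard hcover
  obtain ⟨𝒱, h𝒱, hcard𝒱, hcover𝒱⟩ := hX.exists_subcover_range continuous_inl hopen hcard hcover
  obtain ⟨𝒲, h𝒲, hcard𝒲, hcover𝒲⟩ := hY.exists_subcover_range continuous_inr hopen hcard hcover
  refine ⟨𝒱 ∪ 𝒲, union_subset h𝒱 h𝒲, (mk_union_le _ _).trans_lt (add_lt_of_lt hμ hcard𝒱 hcard𝒲),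
    ?_⟩
  rw [sUnion_union, ← univ_subset_iff, ← range_inl_union_range_inr]
  exact union_subset_union hcover𝒱 hcover𝒲

end CptIn

section WellOrder

variable {α : Type*} [LinearOrder α] [TopologicalSpace α] [OrderTopology α]

theorem IsClosed.dirSupClosed {s : Set α} (hs : IsClosed s) : DirSupClosed s :=
  fun _ hd hne _ _ ha ↦ hs.closure_subset (closure_mono hd (ha.mem_closure hne))

theorem IsOpen.exists_Ioi_subset_of_isStationary {U : Set α} (hU : IsOpen U)
    (hstat : IsStationary U) : ∃ b, Ioi b ⊆ U := by
  have hcof : ¬ IsCofinal Uᶜ := fun hcof ↦ by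
    obtain ⟨x, hxU, hxUc⟩ := hstat ⟨hU.isClosed_compl.dirSupClosed, hcof⟩
    exact hxUc hxU
  obtain ⟨b, hb⟩ := not_isCofinal_iff.1 hcof
  exact ⟨b, fun x hx ↦ not_not.1 fun hxU ↦ (hb x hxU).not_gt hx⟩

variable [WellFoundedLT α]

theorem exists_finite_subcover_of_mk_lt_cof (hα : cof α ≠ ℵ₀) {𝒰 : Set (Set α)}
    (hopen : ∀ U ∈ 𝒰, IsOpen U) (hcard : #𝒰 < cof α) (hcover : ⋃₀ 𝒰 = Set.univ) :
    ∃ 𝒱 ⊆ 𝒰, 𝒱.Finite ∧ ⋃₀ 𝒱 = Set.univ := by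
  cases isEmpty_or_nonempty α
  · exact ⟨∅, empty_subset _, finite_empty, Subsingleton.elim _ _⟩
  obtain ⟨U, hU𝒰, hstat⟩ := (isStationary_sUnion_iff hα hcard).1 (hcover ▸ IsStationary.univ)
  obtain ⟨b, hbU⟩ := (hopen U hU𝒰).exists_Ioi_subset_of_isStationary hstat
  let _ := WellFoundedLT.toOrderBot α
  let _ := WellFoundedLT.conditionallyCompleteLinearOrderBot α
  obtain ⟨𝒱, h𝒱𝒰, h𝒱fin, hIic⟩ := (Icc_bot (a := b) ▸ isCompact_Icc).elim_finite_subcover_image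
    (c := id) hopen (by simp only [id, ← sUnion_eq_biUnion, hcover, subset_univ])
  refine ⟨insert U 𝒱, insert_subset hU𝒰 h𝒱𝒰, h𝒱fin.insert U, eq_univ_of_forall fun x ↦ ?_⟩
  rcases le_or_gt x b with hxb | hbx
  · obtain ⟨V, hV, hxV⟩ := mem_iUnion₂.1 (hIic hxb)
    exact ⟨V, mem_insert_of_mem U hV, hxV⟩
  · exact ⟨U, mem_insert U 𝒱, hbU hbx⟩

end WellOrder

theorem cptIn_aleph0_of_lt_cof {α : Type} [LinearOrder α] [TopologicalSpace α] [OrderTopology α]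
    [WellFoundedLT α] {lam : Cardinal} (hα : cof α ≠ ℵ₀) (hlam : lam < cof α) :
    CptIn ℵ₀ lam α := fun _ hopen hcard hcover ↦
  let ⟨𝒱, h𝒱, hfin, hcover𝒱⟩ :=
    exists_finite_subcover_of_mk_lt_cof hα hopen (hcard.trans_lt hlam) hcover
  ⟨𝒱, h𝒱, lt_aleph0_iff_set_finite.2 hfin, hcover𝒱⟩

instance (c : Cardinal) : WellFoundedLT (ordSpace c) :=
  inferInstanceAs (WellFoundedLT c.ord.ToType)

theorem mk_ordSpace (c : Cardinal) : #(ordSpace c) = c := by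
  rw [ordSpace, mk_toType, card_ord]

theorem cof_ordSpace_succ {lam : Cardinal} (hlam : ℵ₀ ≤ lam) :
    cof (ordSpace (succ lam)) = succ lam :=
  (Ordinal.cof_toType _).trans (isRegular_succ hlam).cof_ord

theorem cptIn_ordSpace_succ {lam : Cardinal} (hlam : ℵ₀ ≤ lam) :
    CptIn ℵ₀ lam (ordSpace (succ lam)) := by
  apply cptIn_aleph0_of_lt_cof <;> rw [cof_ordSpace_succ hlam]
  · exact (hlam.trans_lt (lt_succ lam)).ne'
  · exact lt_succ lam

theorem stmt9_general (μ lam : Cardinal) (hcf : ℵ₀ ≤ lam.ord.cof)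
    (h1 : lam.ord.cof < μ) :
    CptIn μ lam (ordSpace lam.ord.cof ⊕ ordSpace (Order.succ lam)) := by
  have hlam : ℵ₀ ≤ lam := hcf.trans (Ordinal.cof_ord_le lam)
  have hμ : ℵ₀ ≤ μ := hcf.trans h1.le
  refine .sum hμ (cptIn_of_mk_lt ?_) ((cptIn_ordSpace_succ hlam).mono hμ)
  rwa [mk_ordSpace]

theorem stmt9 (μ lam : Cardinal) (hcf : ℵ₀ ≤ lam.ord.cof)
    (h1 : lam.ord.cof < μ) (h2 : μ ≤ lam) :
    CptIn μ lam (ordSpace lam.ord.cof ⊕ ordSpace (Order.succ lam)) :=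
  stmt9_general μ lam hcf h1
end

section
/- If μ is a λ-compact cardinal and λ is a strong limit singular cardinal with cf(λ) ≥ μ, then every product of [μ,λ]-compact topological spaces is [μ,λ]-compact (i.e., [μ,λ]-compactness is productive). One may assume as given the two lemmas: (i) every [μ,ν]-compact space with 2^|I| ≤ λ is D-compact for a μ-complete ultrafilter D over I, and (ii) if D is (μ,ν)-regular and X is D-compact then X is [μ,ν]-compact. -/
open Cardinal

/-! A product of `D`-compact spaces is `D`-compact. So for `ν < λ` the two given lemmas make the
product `[μ,ν]`-compact once there is a `μ`-complete `(μ,ν)`-regular ultrafilter over a set of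
size `2 ^ ν` (then `2 ^ 2 ^ ν < λ`, `λ` being a strong limit); pushing the given ultrafilter
forward yields one. `[μ,ν]`-compactness for all `ν < λ` gives `[μ,λ]`-compactness because
`μ ≤ cf λ < λ`: the increasing unions of initial segments of a cover indexed by `λ`, taken along a
cofinal set, have a subcover of size `< μ ≤ cf λ`; its indices are bounded, so an initial segment,
of size `< λ`, already covers. -/

open Filter Topology in
theorem isDLimit_iff_tendsto {I X : Type} [TopologicalSpace X] {D : Ultrafilter I}
    {x : I → X} {p : X} : IsDLimit D x p ↔ Tendsto x D (𝓝 p) := by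
  refine ⟨fun h s hs => ?_, fun h U hUo hpU => h (hUo.mem_nhds hpU)⟩
  obtain ⟨U, hUs, hUo, hpU⟩ := mem_nhds_iff.1 hs
  exact mem_of_superset (h U hUo hpU) fun i hi => hUs hi

theorem DCompact.pi {I J : Type} {D : Ultrafilter I} {X : J → Type}
    [∀ j, TopologicalSpace (X j)] (h : ∀ j, DCompact D (X j)) : DCompact D (∀ j, X j) := by
  intro x
  choose p hp using fun j => h j fun i => x i j
  exact ⟨p, isDLimit_iff_tendsto.2 <| tendsto_pi_nhds.2 fun j => isDLimit_iff_tendsto.1 (hp j)⟩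

theorem MuComplete.map {μ : Cardinal} {I I' : Type} {D : Ultrafilter I} (h : MuComplete μ D)
    (f : I → I') : MuComplete μ (D.map f) := by
  intro S hS hmem
  have hpre : f ⁻¹' ⋂₀ S = ⋂₀ ((f ⁻¹' ·) '' S) := by
    ext i; simp
  rw [Ultrafilter.mem_map, hpre]
  refine h _ (mk_image_le.trans_lt hS) ?_
  rintro _ ⟨A, hA, rfl⟩
  exact Ultrafilter.mem_map.1 (hmem A hA)

theorem RegUF.mono {μ lam ν : Cardinal} {I : Type} {D : Ultrafilter I} (h : RegUF μ lam D)
    (hν : ν ≤ lam) : RegUF μ ν D := by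
  obtain ⟨A, Z, hA, hZD, hZ⟩ := h
  obtain ⟨B, hB⟩ := le_mk_iff_exists_set.1 (hA ▸ hν)
  refine ⟨B, fun b => Z b, hB, fun b => hZD b, fun S hS => ?_⟩
  rw [← Set.subset_empty_iff, ← hZ (Subtype.val '' S) (by rwa [mk_image_eq Subtype.val_injective])]
  simp

/-- The witness is `i ↦ {a | i ∈ Z a}` for a regularising family `Z`; regularity survives because
each `i` lies in fewer than `μ` of the sets `Z a`. -/
theorem RegUF.exists_map_set {μ ν : Cardinal} {I : Type} {D : Ultrafilter I} (h : RegUF μ ν D)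
    (hμ : μ ≠ 0) : ∃ (A : Type) (f : I → Set A), #A = ν ∧ RegUF μ ν (D.map f) := by
  obtain ⟨A, Z, hA, hZD, hZ⟩ := h
  let f : I → Set A := fun i => {a | i ∈ Z a}
  have hsmall : ∀ i, #(f i) < μ := by
    intro i
    by_contra! hge
    obtain ⟨S, hSf, hS⟩ := le_mk_iff_exists_subset.1 hge
    have hi : i ∈ ⋂ a ∈ S, Z a := Set.mem_iInter₂.2 fun a ha => hSf ha
    simp [hZ S hS] at hi
  refine ⟨A, f, hA, A, fun a => {s | a ∈ s ∧ #s < μ}, hA, fun a => ?_, fun S hS => ?_⟩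
  · exact Ultrafilter.mem_map.2 <| Filter.mem_of_superset (hZD a) fun i hi => ⟨hi, hsmall i⟩
  · obtain ⟨a₀, ha₀⟩ : S.Nonempty := by
      rw [← Set.nonempty_coe_sort, ← mk_ne_zero_iff, hS]; exact hμ
    refine Set.eq_empty_of_forall_notMem fun s hs => ?_
    simp only [Set.mem_iInter, Set.mem_ofPred_eq] at hs
    exact (hs a₀ ha₀).2.not_ge (hS ▸ mk_le_mk_of_subset fun a ha => (hs a ha).1)

section Compactness

variable {X : Type} [TopologicalSpace X] {μ ν : Cardinal}

theorem CptIn.exists_subcover {ι : Type} {f : ι → Set X} (h : CptIn μ ν X)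
    (hf : ∀ i, IsOpen (f i)) (hι : #ι ≤ ν) (hcov : ⋃ i, f i = Set.univ) :
    ∃ s : Set ι, #s < μ ∧ ⋃ i ∈ s, f i = Set.univ := by
  obtain ⟨𝒱, h𝒱, h𝒱μ, h𝒱cov⟩ := h (Set.range f) (by rintro _ ⟨i, rfl⟩; exact hf i)
    (mk_range_le.trans hι) (by rwa [Set.sUnion_range])
  choose g hg using fun V : 𝒱 => h𝒱 V.2
  refine ⟨Set.range g, mk_range_le.trans_lt h𝒱μ, Set.eq_univ_of_forall fun x => ?_⟩
  obtain ⟨V, hV, hxV⟩ := Set.mem_sUnion.1 (h𝒱cov ▸ Set.mem_univ x)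
  exact Set.mem_biUnion (Set.mem_range_self ⟨V, hV⟩) ((hg ⟨V, hV⟩).symm ▸ hxV)

theorem CptIn.exists_iUnion_lt_eq_univ {ι : Type} [LinearOrder ι] {f : ι → Set X}
    (h : CptIn μ (Order.cof ι) X) (hμ : μ ≤ Order.cof ι) (hf : ∀ i, IsOpen (f i))
    (hcov : ⋃ i, f i = Set.univ) : ∃ b, ⋃ i < b, f i = Set.univ := by
  obtain ⟨S, hScof, hS⟩ := Order.exists_cof_eq ι
  let V : S → Set X := fun s => ⋃ i ≤ (s : ι), f i
  have hVcov : ⋃ s, V s = Set.univ := by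
    refine Set.eq_univ_of_forall fun x => ?_
    obtain ⟨i, hxi⟩ := Set.mem_iUnion.1 (hcov ▸ Set.mem_univ x)
    obtain ⟨s, hsS, his⟩ := hScof i
    exact Set.mem_iUnion.2 ⟨⟨s, hsS⟩, Set.mem_biUnion his hxi⟩
  obtain ⟨T, hTμ, hTcov⟩ := h.exists_subcover (fun s => isOpen_biUnion fun i _ => hf i)
    hS.le hVcov
  have hbdd : ¬ IsCofinal (Subtype.val '' T) := fun hT =>
    (Order.cof_le hT).not_gt (mk_image_le.trans_lt (hTμ.trans_le hμ))
  obtain ⟨b, hb⟩ := not_isCofinal_iff.1 hbdd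
  refine ⟨b, Set.eq_univ_of_forall fun x => ?_⟩
  obtain ⟨s, hsT, hxs⟩ := Set.mem_iUnion₂.1 (hTcov ▸ Set.mem_univ x)
  obtain ⟨i, his, hxi⟩ := Set.mem_iUnion₂.1 hxs
  exact Set.mem_biUnion (lt_of_le_of_lt his (hb s ⟨s, hsT, rfl⟩)) hxi

theorem CptIn.of_forall_lt {lam : Cardinal} (hsing : lam.ord.cof < lam) (hcf : μ ≤ lam.ord.cof)
    (h : ∀ ν < lam, CptIn μ ν X) : CptIn μ lam X := by
  intro 𝒰 hopen hcard hcover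
  rcases hcard.lt_or_eq with hlt | heq
  · exact h _ hlt 𝒰 hopen le_rfl hcover
  obtain ⟨e⟩ : Nonempty (lam.ord.ToType ≃ 𝒰) := Cardinal.eq.1 (by rw [mk_ord_toType, heq])
  have hcof : Order.cof lam.ord.ToType = lam.ord.cof := Ordinal.cof_toType _
  obtain ⟨b, hb⟩ := CptIn.exists_iUnion_lt_eq_univ (f := fun i => (e i : Set X))
    (hcof ▸ h _ hsing) (hcof ▸ hcf) (fun i => hopen _ (e i).2)
    (by rw [e.surjective.iUnion_comp (fun U : 𝒰 => (U : Set X)), ← Set.sUnion_eq_iUnion, hcover])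
  let 𝒲 : Set (Set X) := (fun i => (e i : Set X)) '' Set.Iio b
  have h𝒲 : 𝒲 ⊆ 𝒰 := by rintro _ ⟨i, -, rfl⟩; exact (e i).2
  have h𝒲cov : ⋃₀ 𝒲 = Set.univ := by rwa [Set.sUnion_image]
  have h𝒲lam : #𝒲 < lam := mk_image_le.trans_lt (by simpa using mk_Iio_lt b)
  obtain ⟨𝒱, h𝒱, h𝒱μ, h𝒱cov⟩ := h _ h𝒲lam 𝒲 (fun U hU => hopen U (h𝒲 hU)) le_rfl h𝒲cov
  exact ⟨𝒱, h𝒱.trans h𝒲, h𝒱μ, h𝒱cov⟩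

end Compactness

theorem stmt11_general (μ lam : Cardinal) (hμ : ℵ₀ < μ)
    (hcpt : ∃ (I : Type) (D : Ultrafilter I), MuComplete μ D ∧ RegUF μ lam D)
    (hsl : lam.IsStrongLimit) (hsing : lam.ord.cof < lam) (hcf : μ ≤ lam.ord.cof)
    (lem1 : ∀ (I Y : Type) (D : Ultrafilter I) (tY : TopologicalSpace Y),
      MuComplete μ D → 2 ^ #I ≤ lam → CptIn μ lam Y → DCompact D Y)
    (lem2 : ∀ (ν : Cardinal) (I Y : Type) (D : Ultrafilter I) (tY : TopologicalSpace Y),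
      RegUF μ ν D → DCompact D Y → CptIn μ ν Y) :
    ∀ (J : Type) (X : J → Type) (tX : ∀ j, TopologicalSpace (X j)),
      (∀ j, CptIn μ lam (X j)) → CptIn μ lam (∀ j, X j) := by
  intro J X tX hX
  obtain ⟨I, D, hDμ, hDreg⟩ := hcpt
  refine CptIn.of_forall_lt hsing hcf fun ν hν => ?_
  obtain ⟨A, f, hA, hreg⟩ := (hDreg.mono hν.le).exists_map_set (aleph0_pos.trans hμ).ne'
  have hsize : 2 ^ #(Set A) ≤ lam := by
    rw [mk_set, hA]
    exact (hsl.isStrongPrelimit (hsl.isStrongPrelimit hν)).le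
  exact lem2 ν _ _ _ _ hreg (DCompact.pi fun j => lem1 _ _ _ (tX j) (hDμ.map f) hsize (hX j))

theorem stmt11 (μ lam : Cardinal) (hμ : ℵ₀ < μ) (hml : μ ≤ lam)
    (hcpt : ∃ (I : Type) (D : Ultrafilter I), MuComplete μ D ∧ RegUF μ lam D)
    (hsl : lam.IsStrongLimit) (hsing : lam.ord.cof < lam) (hcf : μ ≤ lam.ord.cof)
    (lem1 : ∀ (I Y : Type) (D : Ultrafilter I) (tY : TopologicalSpace Y),
      MuComplete μ D → 2 ^ #I ≤ lam → CptIn μ lam Y → DCompact D Y)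
    (lem2 : ∀ (ν : Cardinal) (I Y : Type) (D : Ultrafilter I) (tY : TopologicalSpace Y),
      RegUF μ ν D → DCompact D Y → CptIn μ ν Y) :
    ∀ (J : Type) (X : J → Type) (tX : ∀ j, TopologicalSpace (X j)),
      (∀ j, CptIn μ lam (X j)) → CptIn μ lam (∀ j, X j) :=
  stmt11_general μ lam hμ hcpt hsl hsing hcf lem1 lem2
end

section
/- If D is a (μ,λ)-regular ultrafilter over I and the topological space X is D-compact, then X is [μ,λ]-compact. -/
open Cardinal

/-! Index an open cover by at most `λ` sets injectively by the regularity family `(Z_a)`, so that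
every `i ∈ I` lies in fewer than `μ` of the sets attached to the cover. If no subcover of size
`< μ` existed, we could pick for each `i` a point `x_i` outside the members attached to `i`. A
`D`-limit `p` of `(x_i)` lies in some member `U` of the cover, and then `{i | x_i ∈ U} ∩ Z_U ∈ D`
contains some `i`, for which `x_i ∈ U` although `U` is attached to `i`. -/

theorem mk_setOf_mem_lt_of_biInter_eq_empty {A I : Type} {μ : Cardinal} {Z : A → Set I}
    (hZ : ∀ S : Set A, #S = μ → ⋂ a ∈ S, Z a = ∅) (i : I) : #{a | i ∈ Z a} < μ := by
  by_contra! hle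
  obtain ⟨T, hT⟩ := le_mk_iff_exists_set.mp hle
  have hempty := hZ (Subtype.val '' T) (by rw [mk_image_eq Subtype.val_injective, hT])
  have hi : i ∈ ⋂ a ∈ Subtype.val '' T, Z a := by
    simp only [Set.mem_iInter₂, Set.mem_image]
    rintro _ ⟨⟨a, ha⟩, -, rfl⟩
    exact ha
  rw [hempty] at hi
  exact hi

theorem RegUF.exists_family_of_mk_le {I ι : Type} {μ lam : Cardinal} {D : Ultrafilter I}
    (hD : RegUF μ lam D) (hι : #ι ≤ lam) :
    ∃ W : ι → Set I, (∀ j, W j ∈ D) ∧ ∀ i, #{j | i ∈ W j} < μ := by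
  obtain ⟨A, Z, hA, hZD, hZ⟩ := hD
  obtain ⟨g⟩ : Nonempty (ι ↪ A) := by rw [← le_def, hA]; exact hι
  exact ⟨Z ∘ g, fun j => hZD (g j), fun i =>
    (mk_preimage_of_injective g {a | i ∈ Z a} g.injective).trans_lt
      (mk_setOf_mem_lt_of_biInter_eq_empty hZ i)⟩

theorem DCompact.exists_biUnion_eq_univ {I X ι : Type} [TopologicalSpace X] {D : Ultrafilter I}
    (hX : DCompact D X) {U : ι → Set X} (hU : ∀ j, IsOpen (U j)) (hcover : ⋃ j, U j = Set.univ)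
    {W : ι → Set I} (hW : ∀ j, W j ∈ D) : ∃ i, ⋃ j ∈ {j | i ∈ W j}, U j = Set.univ := by
  by_contra! hne
  choose x hx using fun i => (Set.ne_univ_iff_exists_notMem _).mp (hne i)
  obtain ⟨p, hp⟩ := hX x
  obtain ⟨j, hpj⟩ := Set.mem_iUnion.mp (hcover ▸ Set.mem_univ p)
  obtain ⟨i, hxi, hij⟩ := D.nonempty_of_mem (D.inter_mem (hp (U j) (hU j) hpj) (hW j))
  exact hx i (Set.mem_biUnion hij hxi)

theorem stmt12 {I X : Type} [TopologicalSpace X] (μ lam : Cardinal) (D : Ultrafilter I)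
    (hreg : RegUF μ lam D) (hX : DCompact D X) : CptIn μ lam X := by
  intro 𝒰 hopen hcard hcover
  obtain ⟨W, hWD, hWsmall⟩ := hreg.exists_family_of_mk_le hcard
  obtain ⟨i, hi⟩ := hX.exists_biUnion_eq_univ (U := Subtype.val) (fun U => hopen U U.2)
    (by rwa [← Set.sUnion_eq_iUnion]) hWD
  refine ⟨Subtype.val '' {U | i ∈ W U}, Subtype.coe_image_subset _ _,
    mk_image_le.trans_lt (hWsmall i), ?_⟩
  rwa [Set.sUnion_image]
end

section
/- Let μ ≤ λ be infinite cardinals with λ strong limit and cf(λ) ≥ μ, and suppose that for every ν < λ there is an ultrafilter D over some index set such that the product space P := ∏_{j∈J} X_j is D-compact and D is (μ,ν)-regular. If every D-compact space (for a (μ,ν)-regular D) is [μ,ν]-compact, then P being [μ,ν]-compact for all ν < λ together with [cf λ, cf λ]-compactness implies P is [μ,λ]-compact. -/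
open Cardinal

/-!
Index a cover `𝒰` of size exactly `λ` (the case `|𝒰| < λ` is the hypothesis itself) by the
well-order `λ`, and split it into `cf λ` initial segments, each of size `< λ`. The unions of
these segments form an open cover of size `cf λ`, so `[cf λ, cf λ]`-compactness keeps fewer than
`cf λ` of them. Fewer than `cf λ` sets of size `< λ` have union of size `< λ`, and this union is
again a cover, from which `[μ, ν]`-compactness for some `ν < λ` extracts fewer than `μ` sets.
-/

universe u

open Set

namespace Cardinal

theorem mk_iUnion_lt_of_lt_cof {α ι : Type u} {κ : Cardinal.{u}} (hκ : ℵ₀ ≤ κ) {F : ι → Set α}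
    (hι : #ι < κ.ord.cof) (hF : ∀ i, #(F i) < κ) : #(⋃ i, F i) < κ :=
  (mk_iUnion_le F).trans_lt <|
    mul_lt_of_lt hκ (hι.trans_le (Ordinal.cof_ord_le κ)) (iSup_lt_of_lt_cof_ord hι hF)

theorem exists_iUnion_eq_univ_mk_lt {α : Type u} (hα : ℵ₀ ≤ #α) :
    ∃ (ι : Type u) (F : ι → Set α),
      #ι = (#α).ord.cof ∧ (∀ i, #(F i) < #α) ∧ ⋃ i, F i = Set.univ := by
  obtain ⟨e⟩ : Nonempty (α ≃ (#α).ord.ToType) := by rw [← Cardinal.eq, mk_toType, card_ord]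
  have := noMaxOrder hα
  obtain ⟨S, hS, hScard⟩ := Order.exists_cof_eq (#α).ord.ToType
  refine ⟨S, fun s => e ⁻¹' Iio s, by rw [hScard, Ordinal.cof_toType], fun s => ?_, ?_⟩
  · rw [mk_preimage_equiv]
    simpa using mk_Iio_lt s.1
  · refine eq_univ_of_forall fun a => ?_
    obtain ⟨b, hab⟩ := exists_gt (e a)
    obtain ⟨s, hs, hbs⟩ := hS b
    exact mem_iUnion.2 ⟨⟨s, hs⟩, hab.trans_le hbs⟩

end Cardinal

theorem CptIn.exists_subfamily {μ κ : Cardinal} {X : Type} [TopologicalSpace X]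
    (h : CptIn μ κ X) {ι : Type} {U : ι → Set X} (hU : ∀ i, IsOpen (U i)) (hι : #ι ≤ κ)
    (hcov : ⋃ i, U i = Set.univ) : ∃ s : Set ι, #s < μ ∧ ⋃ i ∈ s, U i = Set.univ := by
  obtain ⟨𝒱, h𝒱, hcard, h𝒱cov⟩ :=
    h (range U) (forall_mem_range.2 hU) (mk_range_le.trans hι) (by rwa [sUnion_range])
  choose g hg using fun V : 𝒱 => h𝒱 V.2
  refine ⟨range g, mk_range_le.trans_lt hcard, eq_univ_of_forall fun x => ?_⟩
  obtain ⟨V, hV, hxV⟩ := h𝒱cov.symm ▸ mem_univ x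
  exact mem_biUnion (mem_range_self ⟨V, hV⟩) ((hg ⟨V, hV⟩).symm ▸ hxV)

theorem CptIn.of_forall_lt_of_cof {μ κ : Cardinal} {X : Type} [TopologicalSpace X]
    (hκ : ℵ₀ ≤ κ) (hlt : ∀ ν < κ, CptIn μ ν X) (hcof : CptIn κ.ord.cof κ.ord.cof X) :
    CptIn μ κ X := by
  intro 𝒰 hopen hle hcov
  rcases hle.lt_or_eq with hlt𝒰 | rfl
  · exact hlt _ hlt𝒰 𝒰 hopen le_rfl hcov
  obtain ⟨ι, F, hι, hF, hFcov⟩ := exists_iUnion_eq_univ_mk_lt hκ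
  obtain ⟨s, hs, hscov⟩ := hcof.exists_subfamily (U := fun i => ⋃ U ∈ F i, (U : Set X))
    (fun i => isOpen_biUnion fun U _ => hopen U U.2) hι.le <| eq_univ_of_forall fun x => by
      obtain ⟨U, hU, hxU⟩ := hcov.symm ▸ mem_univ x
      obtain ⟨i, hi⟩ := mem_iUnion.1 (hFcov.symm ▸ mem_univ (⟨U, hU⟩ : 𝒰))
      exact mem_iUnion.2 ⟨i, mem_biUnion hi hxU⟩
  have hsmall : #(⋃ i : s, F i) < #𝒰 := mk_iUnion_lt_of_lt_cof hκ hs fun i => hF i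
  obtain ⟨𝒱, h𝒱, hcard, h𝒱cov⟩ := hlt _ hsmall (Subtype.val '' ⋃ i : s, F i)
    (by rintro _ ⟨U, -, rfl⟩; exact hopen U U.2) mk_image_le <| eq_univ_of_forall fun x => by
      obtain ⟨i, hi, hx⟩ := mem_iUnion₂.1 (hscov.symm ▸ mem_univ x)
      obtain ⟨U, hU, hxU⟩ := mem_iUnion₂.1 hx
      exact ⟨U, ⟨U, mem_iUnion.2 ⟨⟨i, hi⟩, hU⟩, rfl⟩, hxU⟩
  exact ⟨𝒱, h𝒱.trans (by rintro _ ⟨U, -, rfl⟩; exact U.2), hcard, h𝒱cov⟩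

theorem stmt14_general (μ lam : Cardinal) (J : Type) (X : J → Type) [∀ j, TopologicalSpace (X j)]
    (hμ : ℵ₀ ≤ μ) (hml : μ ≤ lam) :
    (∀ ν : Cardinal, ν < lam → CptIn μ ν (∀ j, X j)) →
      CptIn (lam.ord.cof) (lam.ord.cof) (∀ j, X j) → CptIn μ lam (∀ j, X j) :=
  CptIn.of_forall_lt_of_cof (hμ.trans hml)

theorem stmt14 (μ lam : Cardinal) (J : Type) (X : J → Type) [∀ j, TopologicalSpace (X j)]
    (hμ : ℵ₀ ≤ μ) (hml : μ ≤ lam) (hsl : lam.IsStrongLimit) (hcf : μ ≤ lam.ord.cof)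
    (hD : ∀ ν : Cardinal, ν < lam →
      ∃ (I : Type) (D : Ultrafilter I), DCompact D (∀ j, X j) ∧ RegUF μ ν D)
    (hlem : ∀ (ν : Cardinal) (I Y : Type) (D : Ultrafilter I) (tY : TopologicalSpace Y),
      RegUF μ ν D → DCompact D Y → CptIn μ ν Y) :
    (∀ ν : Cardinal, ν < lam → CptIn μ ν (∀ j, X j)) →
      CptIn (lam.ord.cof) (lam.ord.cof) (∀ j, X j) → CptIn μ lam (∀ j, X j) :=
  stmt14_general μ lam J X hμ hml
end

section
/- Let κ be an infinite cardinal and D an ultrafilter. If D is κ-complete and D is not (κ',κ')-regular for every infinite κ' < κ, then for each regular κ' < κ the ordinal space κ' with the order topology is D-compact. -/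
open Cardinal

theorem stmt15 {I : Type} (D : Ultrafilter I) (κ : Cardinal) (hκ : ℵ₀ ≤ κ)
    (hc : MuComplete κ D)
    (hnr : ∀ κ' : Cardinal, ℵ₀ ≤ κ' → κ' < κ → ¬RegUF κ' κ' D) :
    ∀ κ' : Cardinal, κ'.IsRegular → κ' < κ → DCompact D (ordSpace κ') := by
  intro κ' hreg hlt x
  classical
  have hκ' : ℵ₀ ≤ κ' := hreg.aleph0_le
  have hmkX : #(ordSpace κ') = κ' := by
    show #(κ'.ord.ToType) = κ'
    rw [Cardinal.mk_toType, Cardinal.card_ord]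
  have hIio : ∀ b : ordSpace κ', #(Set.Iio b) < κ' := fun b =>
    Cardinal.mk_Iio_ord_toType (c := κ') b
  have wf : WellFounded ((· < ·) : ordSpace κ' → ordSpace κ' → Prop) :=
    @IsWellFounded.wf κ'.ord.ToType (· < ·) inferInstance
  by_cases hS : ∃ α : ordSpace κ', {i | x i < α} ∈ D
  · -- take the least such α
    set Sset : Set (ordSpace κ') := {α | {i | x i < α} ∈ D} with hSset
    obtain ⟨p', hp'mem, hp'min⟩ : ∃ p' ∈ Sset, ∀ β ∈ Sset, ¬ β < p' :=
      ⟨wf.min Sset hS, wf.min_mem Sset hS, fun β hβ => wf.not_lt_min Sset hβ⟩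
    have hge : ∀ β : ordSpace κ', β < p' → {i | β ≤ x i} ∈ D := by
      intro β hβ
      have hβn : {i | x i < β} ∉ D := fun h => hp'min β h hβ
      have := (Ultrafilter.compl_mem_iff_notMem (s := {i | x i < β})).2 hβn
      exact D.toFilter.mem_of_superset this (fun i (hi : ¬ x i < β) => not_lt.1 hi)
    by_cases hmax : ∃ q, q < p' ∧ ∀ β, β < p' → β ≤ q
    · obtain ⟨q, hq, hqmax⟩ := hmax
      have heq : {i | x i = q} ∈ D := by
        have h1 : {i | x i < p'} ∩ {i | q ≤ x i} ∈ D := Filter.inter_mem hp'mem (hge q hq)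
        exact D.toFilter.mem_of_superset h1 (fun i ⟨h2, h3⟩ => le_antisymm (hqmax _ h2) h3)
      exact ⟨q, fun U hU hqU => D.toFilter.mem_of_superset heq (fun i hi => by
        simp only [Set.mem_setOf_eq] at hi ⊢; rw [hi]; exact hqU)⟩
    · exfalso
      push_neg at hmax
      by_cases hbot : ∃ β, β < p'
      · obtain ⟨β₀, hβ₀⟩ := hbot
        set T : Set (Set I) := (fun β : ordSpace κ' => {i | β ≤ x i ∧ x i < p'}) '' Set.Iio p'
          with hT
        have hTcard : #T < κ :=
          lt_trans (lt_of_le_of_lt Cardinal.mk_image_le (hIio p')) hlt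
        have hTmem : ∀ A ∈ T, A ∈ D := by
          rintro A ⟨β, hβ, rfl⟩
          exact D.toFilter.mem_of_superset (Filter.inter_mem (hge β hβ) hp'mem)
            (fun i ⟨h1, h2⟩ => ⟨h1, h2⟩)
        have hInt : ⋂₀ T ∈ D := hc T hTcard hTmem
        have hEmpty : ⋂₀ T = ∅ := by
          ext i
          simp only [Set.mem_sInter, Set.mem_empty_iff_false, iff_false]
          intro hall
          have hxi : x i < p' := (hall _ ⟨β₀, hβ₀, rfl⟩).2
          obtain ⟨β, hβ, hβ'⟩ := hmax (x i) hxi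
          exact absurd (hall _ ⟨β, hβ, rfl⟩).1 (not_le.2 hβ')
        rw [hEmpty] at hInt
        exact D.toFilter.empty_notMem hInt
      · -- p' is the minimum, so {i | x i < p'} = ∅ ∈ D, contradiction
        push_neg at hbot
        have : {i | x i < p'} = ∅ := by
          ext i; simp only [Set.mem_setOf_eq, Set.mem_empty_iff_false, iff_false]
          exact not_lt.2 (hbot (x i))
        have h2 : {i | x i < p'} ∈ D := hp'mem
        rw [this] at h2
        exact D.toFilter.empty_notMem h2
  · exfalso
    push_neg at hS
    refine hnr κ' hκ' hlt ⟨ordSpace κ', fun α => {i | α ≤ x i}, hmkX, ?_, ?_⟩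
    · intro α
      have := (Ultrafilter.compl_mem_iff_notMem (s := {i | x i < α})).2 (hS α)
      exact D.toFilter.mem_of_superset this (fun i (hi : ¬ x i < α) => not_lt.1 hi)
    · intro S hScard
      ext i
      simp only [Set.mem_iInter, Set.mem_setOf_eq, Set.mem_empty_iff_false, iff_false]
      intro hall
      have hsub : S ⊆ Set.Iic (x i) := fun α hα => hall α hα
      have h1 : #(Set.Iic (x i)) < κ' := by
        have : Set.Iic (x i) = insert (x i) (Set.Iio (x i)) := by
          ext b; simp [le_iff_lt_or_eq, or_comm]
        rw [this]
        calc #(insert (x i) (Set.Iio (x i)) : Set (ordSpace κ'))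
            ≤ #(Set.Iio (x i)) + 1 := Cardinal.mk_insert_le
          _ < κ' := Cardinal.add_lt_of_lt hκ' (hIio (x i)) (lt_of_lt_of_le one_lt_aleph0 hκ')
      have h2 : #S ≤ #(Set.Iic (x i)) := Cardinal.mk_le_mk_of_subset hsub
      rw [hScard] at h2
      exact absurd h2 (not_le.2 h1)
end

section
/- If X is [μ,λ]-compact and fails to be D-compact for a μ-complete ultrafilter D over I with |D| ≤ λ, then there is an open cover (V_Z)_{Z∈D} of X indexed by D such that x_i ∉ V_Z whenever i ∈ Z ∈ D, where (x_i)_{i∈I} witnesses the failure of D-compactness. -/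
open Cardinal

theorem stmt16 {I X : Type} [TopologicalSpace X] (μ lam : Cardinal) (D : Ultrafilter I)
    (hD : MuComplete μ D) (hcard : #{Z : Set I // Z ∈ D} ≤ lam)
    (hX : CptIn μ lam X) (x : I → X) (hx : ¬∃ p : X, IsDLimit D x p) :
    ∃ V : Set I → Set X, (∀ Z ∈ D, IsOpen (V Z)) ∧
      (⋃ Z ∈ {Z : Set I | Z ∈ D}, V Z) = Set.univ ∧
      ∀ Z ∈ D, ∀ i ∈ Z, x i ∉ V Z := by
  refine ⟨fun Z => ⋃₀ {U : Set X | IsOpen U ∧ ∀ i ∈ Z, x i ∉ U}, ?_, ?_, ?_⟩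
  · exact fun Z _ => isOpen_sUnion fun U hU => hU.1
  · apply Set.eq_univ_of_forall
    intro p
    push_neg at hx
    obtain ⟨U, hUo, hpU, hUD⟩ := not_forall.1 (hx p) |>.imp fun U h => by
      push_neg at h; exact h
    have hcomp : {i | x i ∉ U} ∈ D := Ultrafilter.compl_mem_iff_notMem.2 hUD
    exact Set.mem_biUnion hcomp ⟨U, ⟨hUo, fun i hi => hi⟩, hpU⟩
  · rintro Z _ i hi hmem
    obtain ⟨U, ⟨_, hU⟩, hxU⟩ := hmem
    exact hU i hi hxU
end
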